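/- Let n be a natural number and let W_n act on ℤ^n via the representation ρ. Then the group of ℤ-linear automorphisms of ℤ^n commuting with ρ(w) for every w ∈ W_n is exactly { diag(±1, …, ±1) }; in particular, the group Aut_{W_n}(ℤ^n) of W_n-equivariant automorphisms is isomorphic to C_2^n. -/

import Mathlib

/-!
`ρ(x̄ᵢ)` fixes `eᵢ` and negates every other coordinate, so an automorphism `u` commuting with it
maps `eᵢ` into the fixed line `ℤ eᵢ`. Hence `u` and `u⁻¹` are diagonal, and their diagonal entries
are mutually inverse units of `ℤ`. Conversely `ρ` takes values in the diagonal matrices, which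
commute with each other.
-/


/-- The relators `x̄_i²` of `W_n`, the free product of `n` copies of `C_2`. -/
def Wrels (n : ℕ) : Set (FreeGroup (Fin n)) :=
  Set.range fun i : Fin n => FreeGroup.of i ^ 2

/-- The group `W_n = C_2 * ⋯ * C_2` (`n` factors). -/
abbrev W (n : ℕ) : Type := PresentedGroup (Wrels n)

/-- The generators `x̄_1, …, x̄_n` of `W_n`. -/
def xbar (n : ℕ) (i : Fin n) : W n := PresentedGroup.of i

/-- The linear map `diag(-1, …, -1, 1, -1, …, -1)` on `ℤⁿ` (entry `1` in position `i`). -/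
def Dmap (n : ℕ) (i : Fin n) : (Fin n → ℤ) →ₗ[ℤ] (Fin n → ℤ) where
  toFun v := fun j => if j = i then v j else -v j
  map_add' u v := by funext j; by_cases h : j = i <;> simp [h] <;> ring
  map_smul' c v := by funext j; by_cases h : j = i <;> simp [h]

theorem Dmap_sq (n : ℕ) (i : Fin n) : Dmap n i * Dmap n i = 1 := by
  apply LinearMap.ext
  intro v
  funext j
  by_cases h : j = i <;> simp [Dmap, Module.End.mul_apply, h]

/-- `Dmap n i` as a unit of the endomorphism ring, i.e. a linear automorphism. -/
def Dunit (n : ℕ) (i : Fin n) : ((Fin n → ℤ) →ₗ[ℤ] (Fin n → ℤ))ˣ :=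
  ⟨Dmap n i, Dmap n i, Dmap_sq n i, Dmap_sq n i⟩

theorem Dunit_sq (n : ℕ) (i : Fin n) : Dunit n i ^ 2 = 1 := by
  rw [sq]
  exact Units.ext (Dmap_sq n i)

/-- The representation `ρ : W_n → GL_n(ℤ)`, with `ρ(x̄_i) = diag(-1,…,-1,1,-1,…,-1)`. -/
def rho (n : ℕ) : W n →* ((Fin n → ℤ) →ₗ[ℤ] (Fin n → ℤ))ˣ :=
  PresentedGroup.toGroup (f := Dunit n) (by
    rintro r ⟨i, rfl⟩
    simp [Dunit_sq])

theorem rho_of (n : ℕ) (i : Fin n) : rho n (xbar n i) = Dunit n i :=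
  PresentedGroup.toGroup.of _

open Module

section Diagonal

variable {ι R : Type*} [CommSemiring R]

variable (ι R) in
def diagUnits : (ι → Rˣ) →* (End R (ι → R))ˣ :=
  (Units.map (Algebra.lmul R (ι → R)).toMonoidHom).comp MulEquiv.piUnits.symm.toMonoidHom

@[simp]
theorem diagUnits_apply (ε : ι → Rˣ) (v : ι → R) (j : ι) :
    (diagUnits ι R ε : End R (ι → R)) v j = ε j * v j :=
  rfl

theorem diagUnits_injective : Function.Injective (diagUnits ι R) :=
  (Units.map_injective Algebra.lmul_injective).comp MulEquiv.piUnits.symm.injective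

variable [Fintype ι] [DecidableEq ι]

theorem eq_lmul_of_apply_single_eq_zero (f : End R (ι → R))
    (hf : ∀ i j, i ≠ j → f (Pi.single i 1) j = 0) :
    f = Algebra.lmul R (ι → R) (fun j => f (Pi.single j 1) j) := by
  ext i j
  rcases eq_or_ne i j with rfl | hij
  · simp
  · simp [hf i j hij, Pi.single_eq_of_ne' hij]

theorem mem_range_diagUnits_of_apply_single_eq_zero (u : (End R (ι → R))ˣ)
    (hu : ∀ i j, i ≠ j → (u : End R (ι → R)) (Pi.single i 1) j = 0)
    (hu' : ∀ i j, i ≠ j → (↑u⁻¹ : End R (ι → R)) (Pi.single i 1) j = 0) :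
    u ∈ (diagUnits ι R).range := by
  set d := fun j => (u : End R (ι → R)) (Pi.single j 1) j
  set d' := fun j => (↑u⁻¹ : End R (ι → R)) (Pi.single j 1) j
  have hd : (u : End R (ι → R)) = Algebra.lmul R (ι → R) d :=
    eq_lmul_of_apply_single_eq_zero _ hu
  have hd' : (↑u⁻¹ : End R (ι → R)) = Algebra.lmul R (ι → R) d' :=
    eq_lmul_of_apply_single_eq_zero _ hu'
  have hdd' : d * d' = 1 := Algebra.lmul_injective (R := R) <| by
    rw [map_mul, map_one, ← hd, ← hd', Units.mul_inv]
  refine ⟨MulEquiv.piUnits ⟨d, d', hdd', mul_comm d' d ▸ hdd'⟩, Units.ext ?_⟩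
  rw [hd]
  rfl

end Diagonal

theorem Dmap_apply_of_ne {n : ℕ} {i j : Fin n} (v : Fin n → ℤ) (hj : j ≠ i) :
    Dmap n i v j = -v j :=
  if_neg hj

theorem Dmap_single_self (n : ℕ) (i : Fin n) : Dmap n i (Pi.single i 1) = Pi.single i 1 := by
  funext j
  by_cases hj : j = i
  · subst hj; exact if_pos rfl
  · rw [Dmap_apply_of_ne _ hj, Pi.single_eq_of_ne hj, neg_zero]

theorem apply_single_eq_zero_of_commute_Dmap {n : ℕ} {f : End ℤ (Fin n → ℤ)} {i j : Fin n}
    (hf : Commute (Dmap n i) f) (hij : i ≠ j) : f (Pi.single i 1) j = 0 := by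
  have h := congrFun (LinearMap.congr_fun hf.eq (Pi.single i 1)) j
  rw [End.mul_apply, End.mul_apply, Dmap_single_self, Dmap_apply_of_ne _ hij.symm] at h
  omega

theorem Dunit_eq_diagUnits (n : ℕ) (i : Fin n) :
    Dunit n i = diagUnits (Fin n) ℤ (fun j => if j = i then 1 else -1) := by
  ext v j
  by_cases hj : j = i <;> simp [Dunit, Dmap, hj]

theorem range_rho_le_range_diagUnits (n : ℕ) : (rho n).range ≤ (diagUnits (Fin n) ℤ).range := by
  rw [MonoidHom.range_eq_map, ← PresentedGroup.closure_range_of, MonoidHom.map_closure,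
    Subgroup.closure_le, ← Set.range_comp]
  rintro _ ⟨i, rfl⟩
  exact ⟨_, (Dunit_eq_diagUnits n i).symm.trans (rho_of n i).symm⟩

theorem apply_single_eq_zero_of_mem_centralizer {n : ℕ} {u : (End ℤ (Fin n → ℤ))ˣ}
    (hu : u ∈ Subgroup.centralizer (Set.range ⇑(rho n))) (i j : Fin n) (hij : i ≠ j) :
    (u : End ℤ (Fin n → ℤ)) (Pi.single i 1) j = 0 := by
  have h := hu _ ⟨xbar n i, rfl⟩
  rw [rho_of] at h
  exact apply_single_eq_zero_of_commute_Dmap (congrArg Units.val h) hij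

theorem centralizer_range_rho (n : ℕ) :
    Subgroup.centralizer (Set.range ⇑(rho n)) = (diagUnits (Fin n) ℤ).range := by
  apply le_antisymm
  · intro u hu
    exact mem_range_diagUnits_of_apply_single_eq_zero u
      (apply_single_eq_zero_of_mem_centralizer hu)
      (apply_single_eq_zero_of_mem_centralizer (inv_mem hu))
  · rintro _ ⟨ε, rfl⟩ _ ⟨w, rfl⟩
    obtain ⟨δ, hδ⟩ := range_rho_le_range_diagUnits n ⟨w, rfl⟩
    rw [← hδ, ← map_mul, ← map_mul, mul_comm]

theorem stmt11 (n : ℕ) :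
    (∀ u : ((Fin n → ℤ) →ₗ[ℤ] (Fin n → ℤ))ˣ,
      u ∈ Subgroup.centralizer (Set.range ⇑(rho n)) ↔
        ∃ ε : Fin n → ℤˣ, ∀ (v : Fin n → ℤ) (j : Fin n),
          (u : (Fin n → ℤ) →ₗ[ℤ] (Fin n → ℤ)) v j = (ε j : ℤ) * v j) ∧
    Nonempty (Subgroup.centralizer (Set.range ⇑(rho n)) ≃* (Fin n → ℤˣ)) := by
  rw [centralizer_range_rho]
  refine ⟨fun u => exists_congr fun ε => ?_, ⟨(MonoidHom.ofInjective diagUnits_injective).symm⟩⟩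
  simp only [Units.ext_iff, LinearMap.ext_iff, funext_iff, diagUnits_apply, eq_comm]
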